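/- arXiv:2502.01458 — 5 statements merged into one kernel-verified Lean document; each statement's English description precedes it below -/
import Mathlib

section
/- Let P, Q be probability measures on a finite set S and let g : S → ℝ be such that g(X) is σ-subgaussian under P, i.e., log E_P[exp(ρ(g − E_P g))] ≤ ρ²σ²/2 for all ρ ∈ ℝ. Then |E_Q[g] − E_P[g]| ≤ sqrt(2σ² · KL(Q‖P)). -/
open Real Finset

/-- Donsker–Varadhan inequality, finite form. -/
lemma dv_aux {S : Type*} [Fintype S] (P Q : S → ℝ)
    (hP : ∀ s, 0 ≤ P s) (hQ : ∀ s, 0 ≤ Q s)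
    (hQs : ∑ s, Q s = 1)
    (hac : ∀ s, P s = 0 → Q s = 0) (f : S → ℝ) :
    (∑ s, Q s * f s) - (∑ s, Q s * Real.log (Q s / P s)) ≤
      Real.log (∑ s, P s * Real.exp (f s)) := by
  classical
  set t : Finset S := Finset.univ.filter (fun s => Q s ≠ 0) with ht
  have hQt : ∑ s ∈ t, Q s = 1 := by
    rw [ht, Finset.sum_filter_of_ne (fun x _ h => h), hQs]
  have hQpos : ∀ s ∈ t, 0 < Q s := fun s hs =>
    (hQ s).lt_of_ne' (by simpa [ht] using hs)
  have hPpos : ∀ s ∈ t, 0 < P s := fun s hs =>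
    (hP s).lt_of_ne' (fun h => (by simpa [ht] using hs : Q s ≠ 0) (hac s h))
  have htne : t.Nonempty := by
    by_contra h
    rw [Finset.not_nonempty_iff_eq_empty] at h
    rw [h, Finset.sum_empty] at hQt
    norm_num at hQt
  set x : S → ℝ := fun s => P s * Real.exp (f s) / Q s with hx
  have hxpos : ∀ s ∈ t, x s ∈ Set.Ioi (0 : ℝ) := fun s hs =>
    div_pos (mul_pos (hPpos s hs) (Real.exp_pos _)) (hQpos s hs)
  have jensen := (strictConcaveOn_log_Ioi.concaveOn).le_map_sum
    (t := t) (w := Q) (p := x) (fun s hs => (hQpos s hs).le) hQt hxpos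
  simp only [smul_eq_mul] at jensen
  have hsum_t : ∑ s ∈ t, Q s * x s = ∑ s ∈ t, P s * Real.exp (f s) := by
    refine Finset.sum_congr rfl fun s hs => ?_
    rw [hx]
    field_simp [(hQpos s hs).ne']
  have hpos_t : 0 < ∑ s ∈ t, P s * Real.exp (f s) :=
    Finset.sum_pos (fun s hs => mul_pos (hPpos s hs) (Real.exp_pos _)) htne
  have hle_sum : ∑ s ∈ t, P s * Real.exp (f s) ≤ ∑ s, P s * Real.exp (f s) :=
    Finset.sum_le_sum_of_subset_of_nonneg (Finset.filter_subset _ _)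
      (fun s _ _ => mul_nonneg (hP s) (Real.exp_pos _).le)
  have hlog_le : Real.log (∑ s ∈ t, P s * Real.exp (f s)) ≤
      Real.log (∑ s, P s * Real.exp (f s)) := Real.log_le_log hpos_t hle_sum
  have hLHS : (∑ s, Q s * f s) - (∑ s, Q s * Real.log (Q s / P s)) =
      ∑ s ∈ t, Q s * Real.log (x s) := by
    rw [← Finset.sum_sub_distrib]
    rw [(Finset.sum_subset (Finset.subset_univ t) (fun s _ hs => by
      have hq0 : Q s = 0 := by
        by_contra hq
        exact hs (by simp [ht, hq])
      rw [hq0]; ring)).symm]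
    refine Finset.sum_congr rfl fun s hs => ?_
    have h1 : Real.log (x s) = Real.log (P s) + f s - Real.log (Q s) := by
      rw [hx, Real.log_div (mul_pos (hPpos s hs) (Real.exp_pos _)).ne' (hQpos s hs).ne',
        Real.log_mul (hPpos s hs).ne' (Real.exp_ne_zero _), Real.log_exp]
    have h2 : Real.log (Q s / P s) = Real.log (Q s) - Real.log (P s) :=
      Real.log_div (hQpos s hs).ne' (hPpos s hs).ne'
    rw [h1, h2]; ring
  rw [hLHS]
  calc ∑ s ∈ t, Q s * Real.log (x s) ≤ Real.log (∑ s ∈ t, Q s * x s) := jensen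
    _ = Real.log (∑ s ∈ t, P s * Real.exp (f s)) := by rw [hsum_t]
    _ ≤ Real.log (∑ s, P s * Real.exp (f s)) := hlog_le

theorem stmt_2 {S : Type*} [Fintype S] (P Q : S → ℝ)
    (hP : ∀ s, 0 ≤ P s) (hQ : ∀ s, 0 ≤ Q s)
    (hPs : ∑ s, P s = 1) (hQs : ∑ s, Q s = 1)
    (hac : ∀ s, P s = 0 → Q s = 0)
    (g : S → ℝ) (σ : ℝ) (hσ : 0 < σ)
    (hsub : ∀ ρ : ℝ,
      Real.log (∑ s, P s * Real.exp (ρ * (g s - ∑ s', P s' * g s'))) ≤ ρ ^ 2 * σ ^ 2 / 2) :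
    |(∑ s, Q s * g s) - ∑ s, P s * g s| ≤
      Real.sqrt (2 * σ ^ 2 * ∑ s, Q s * Real.log (Q s / P s)) := by
  set Z := ∑ s, P s * g s with hZ
  set Δ := (∑ s, Q s * g s) - Z with hΔ
  set KL := ∑ s, Q s * Real.log (Q s / P s) with hKL
  have key : ∀ ρ : ℝ, ρ * Δ - KL ≤ ρ ^ 2 * σ ^ 2 / 2 := by
    intro ρ
    have h1 := dv_aux P Q hP hQ hQs hac (fun s => ρ * (g s - Z))
    have h2 : ∑ s, Q s * (ρ * (g s - Z)) = ρ * Δ := by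
      calc ∑ s, Q s * (ρ * (g s - Z)) = ∑ s, (ρ * (Q s * g s) - ρ * (Q s * Z)) :=
            Finset.sum_congr rfl fun s _ => by ring
        _ = ρ * (∑ s, Q s * g s) - ρ * ((∑ s, Q s) * Z) := by
            rw [Finset.sum_sub_distrib, ← Finset.mul_sum, ← Finset.mul_sum, Finset.sum_mul]
        _ = ρ * Δ := by rw [hQs, hΔ]; ring
    rw [h2] at h1
    exact h1.trans (hsub ρ)
  have hdisc : Δ ^ 2 ≤ 2 * σ ^ 2 * KL := by
    have h := discrim_le_zero (a := σ ^ 2 / 2) (b := -Δ) (c := KL) (fun y => by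
      have hy := key y
      rw [pow_two] at hy
      nlinarith)
    rw [discrim, neg_sq] at h
    clear_value Z Δ KL
    linarith
  calc |Δ| = Real.sqrt (Δ ^ 2) := (Real.sqrt_sq_eq_abs Δ).symm
    _ ≤ Real.sqrt (2 * σ ^ 2 * KL) := Real.sqrt_le_sqrt hdisc
end

section
/- Generalization transfer bound: let p*, p_w, p_s be probability vectors in ℝ^k with all entries in [γ, 1], γ > 0. Then |KL(p*‖p_s) − KL(p*‖p_w)| ≤ ((√2/γ) · log(1/γ)) · sqrt(KL(p_w‖p_s)). -/
open Real Finset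


lemma auxDeriv {f : ℝ → ℝ} {f' : ℝ → ℝ}
    (key : ∀ x ∈ Set.Ioi (0:ℝ), HasDerivAt f (f' x) x)
    (hneg : ∀ x ∈ Set.Ioi (0:ℝ), f' x ≤ 0) :
    AntitoneOn f (Set.Ioi 0) := by
  apply antitoneOn_of_deriv_nonpos (convex_Ioi 0)
  · exact fun x hx => ((key x hx).continuousAt).continuousWithinAt
  · rw [interior_Ioi]
    exact fun x hx => ((key x hx).differentiableAt).differentiableWithinAt
  · rw [interior_Ioi]
    intro x hx
    rw [(key x hx).deriv]
    exact hneg x hx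

-- (A): for 0 < w ≤ 1, (1-w) + (1-w)^2/2 ≤ -log w
lemma auxA {w : ℝ} (h0 : 0 < w) (h1 : w ≤ 1) :
    (1 - w) + (1 - w)^2/2 ≤ -Real.log w := by
  have anti : AntitoneOn (fun x : ℝ => -Real.log x - (1 - x) - (1 - x)^2/2) (Set.Ioi 0) := by
    apply auxDeriv (f' := fun x => -x⁻¹ + 1 + (1 - x))
    · intro x hx
      have hx0 : (0:ℝ) < x := hx
      have ha : HasDerivAt (fun x : ℝ => -Real.log x) (-x⁻¹) x :=
        (Real.hasDerivAt_log hx0.ne').neg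
      have hb : HasDerivAt (fun x : ℝ => 1 - x) (-1) x := by
        simpa using (hasDerivAt_id x).const_sub 1
      have hc : HasDerivAt (fun x : ℝ => (1 - x)^2/2) ((1 - x) * (-1)) x := by
        have := (hb.pow 2).div_const 2
        exact this.congr_deriv (by ring)
      have := (ha.sub hb).sub hc
      exact this.congr_deriv (by ring)
    · intro x hx
      have hx0 : (0:ℝ) < x := hx
      have h2 : 2 ≤ x + x⁻¹ := by
        rw [← sub_nonneg]
        have : x + x⁻¹ - 2 = (x - 1)^2 / x := by field_simp; ring
        rw [this]; positivity
      linarith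
  have h01 : (1:ℝ) ∈ Set.Ioi (0:ℝ) := by norm_num
  have := anti h0 h01 h1
  simp only [Real.log_one] at this
  nlinarith [this]

-- (B): for 0 < v ≤ 1, -log v ≤ (v⁻¹ - v)/2
lemma auxB {v : ℝ} (h0 : 0 < v) (h1 : v ≤ 1) :
    -Real.log v ≤ (v⁻¹ - v)/2 := by
  have anti : AntitoneOn (fun x : ℝ => (x⁻¹ - x)/2 + Real.log x) (Set.Ioi 0) := by
    apply auxDeriv (f' := fun x => (-(x^2)⁻¹ - 1)/2 + x⁻¹)
    · intro x hx
      have hx0 : (0:ℝ) < x := hx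
      have ha : HasDerivAt (fun x : ℝ => (x⁻¹ - x)/2) ((-(x^2)⁻¹ - 1)/2) x := by
        have h1 : HasDerivAt (fun x : ℝ => x⁻¹) (-(x^2)⁻¹) x := by
          simpa using hasDerivAt_inv hx0.ne'
        exact (h1.sub (hasDerivAt_id x)).div_const 2
      exact ha.add (Real.hasDerivAt_log hx0.ne')
    · intro x hx
      have hx0 : (0:ℝ) < x := hx
      have : (-(x^2)⁻¹ - 1)/2 + x⁻¹ = -((x⁻¹ - 1)^2)/2 := by
        field_simp
        ring
      rw [this]
      have : (0:ℝ) ≤ ((x⁻¹ - 1)^2)/2 := by positivity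
      linarith
  have h01 : (1:ℝ) ∈ Set.Ioi (0:ℝ) := by norm_num
  have := anti h0 h01 h1
  simp only [Real.log_one] at this
  nlinarith [this]


-- |log (x/y)| ≤ |x - y| / γ
lemma auxLip {γ x y : ℝ} (hγ : 0 < γ) (hx : γ ≤ x) (hy : γ ≤ y) :
    |Real.log (x / y)| ≤ |x - y| / γ := by
  have hx0 : 0 < x := hγ.trans_le hx
  have hy0 : 0 < y := hγ.trans_le hy
  have main : ∀ a b : ℝ, γ ≤ a → γ ≤ b → b ≤ a → Real.log (a / b) ≤ (a - b) / γ := by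
    intro a b ha hb hba
    have hb0 : 0 < b := hγ.trans_le hb
    have ha0 : 0 < a := hγ.trans_le ha
    have h1 : Real.log (a / b) ≤ a / b - 1 :=
      Real.log_le_sub_one_of_pos (by positivity)
    have h2 : a / b - 1 = (a - b) / b := by field_simp
    have h3 : (a - b) / b ≤ (a - b) / γ :=
      div_le_div_of_nonneg_left (by linarith) hγ hb
    linarith [h1, h2 ▸ h1]
  rcases le_total y x with h | h
  · rw [abs_of_nonneg (Real.log_nonneg (by rw [le_div_iff₀ hy0]; linarith)),
      abs_of_nonneg (by linarith : (0:ℝ) ≤ x - y)]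
    exact main x y hx hy h
  · rw [abs_of_nonpos (Real.log_nonpos (by positivity) (by rw [div_le_one hy0]; linarith)),
      abs_of_nonpos (by linarith : x - y ≤ 0)]
    have := main y x hy hx h
    have hlog : Real.log (x / y) = -Real.log (y / x) := by
      rw [← Real.log_inv, inv_div]
    rw [hlog, neg_neg]
    have : -(x - y) = y - x := by ring
    rw [this]
    exact main y x hy hx h
  done

-- termwise Gibbs: (p-q)^2/(2M) ≤ p log(p/q) + q - p for γ ≤ p,q ≤ M
lemma auxGibbs {γ M p q : ℝ} (hγ : 0 < γ) (hp1 : γ ≤ p) (hp2 : p ≤ M)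
    (hq1 : γ ≤ q) (hq2 : q ≤ M) :
    (p - q)^2/(2*M) ≤ p * Real.log (p/q) + q - p := by
  have hp0 : 0 < p := hγ.trans_le hp1
  have hq0 : 0 < q := hγ.trans_le hq1
  have hM0 : 0 < M := hp0.trans_le hp2
  rcases le_total q p with h | h
  · -- q ≤ p : use auxA with w = q/p
    set w := q / p with hw
    have hw0 : 0 < w := by positivity
    have hw1 : w ≤ 1 := by rw [hw, div_le_one hp0]; exact h
    have hA := auxA hw0 hw1
    have hlog : Real.log (p / q) = -Real.log w := by
      rw [hw, ← Real.log_inv, inv_div]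
    have hq' : q = w * p := by rw [hw]; field_simp
    have key : (p - q)^2/(2*p) ≤ p * Real.log (p/q) + q - p := by
      rw [hlog, hq']
      have h2 : (p - w*p)^2/(2*p) = p * ((1-w)^2/2) := by
        field_simp
      rw [h2]
      have h3 : p * ((1-w)^2/2) ≤ p * (-Real.log w + w - 1) := by
        apply mul_le_mul_of_nonneg_left _ hp0.le
        nlinarith [hA]
      nlinarith [h3]
    calc (p - q)^2/(2*M) ≤ (p - q)^2/(2*p) := by
          apply div_le_div_of_nonneg_left (sq_nonneg _) (by positivity) (by linarith)
      _ ≤ _ := key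
  · -- p ≤ q : use auxB with v = p/q
    set v := p / q with hv
    have hv0 : 0 < v := by positivity
    have hv1 : v ≤ 1 := by rw [hv, div_le_one hq0]; exact h
    have hB := auxB hv0 hv1
    have hp' : p = v * q := by rw [hv]; field_simp
    have hvlog : v * Real.log v ≥ (v^2 - 1)/2 := by
      -- from auxB: -log v ≤ (v⁻¹ - v)/2, multiply by v > 0
      have := mul_le_mul_of_nonneg_left hB hv0.le
      have hinv : v * ((v⁻¹ - v)/2) = (1 - v^2)/2 := by
        field_simp
      nlinarith [this, hinv ▸ this]
    have key : (p - q)^2/(2*q) ≤ p * Real.log (p/q) + q - p := by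
      rw [← hv, hp']
      have h2 : (v*q - q)^2/(2*q) = q * ((1-v)^2/2) := by
        field_simp; ring
      rw [h2]
      have h3 : q * ((1-v)^2/2) ≤ q * (v * Real.log v + 1 - v) := by
        apply mul_le_mul_of_nonneg_left _ hq0.le
        nlinarith [hvlog]
      nlinarith [h3]
    calc (p - q)^2/(2*M) ≤ (p - q)^2/(2*q) := by
          apply div_le_div_of_nonneg_left (sq_nonneg _) (by positivity) (by linarith)
      _ ≤ _ := key


-- entry upper bound for k ≥ 2
lemma auxUB {k : ℕ} (hk : 2 ≤ k) {γ : ℝ} (hγ : 0 < γ) {p : Fin k → ℝ}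
    (h : ∀ j, γ ≤ p j) (hsum : ∑ j, p j = 1) (j : Fin k) : p j ≤ 1 - γ := by
  have hne : (univ.erase j).Nonempty := by
    rw [← Finset.card_pos, Finset.card_erase_of_mem (Finset.mem_univ j),
      Finset.card_univ, Fintype.card_fin]
    omega
  obtain ⟨i, hi⟩ := hne
  have h1 : γ ≤ ∑ i' ∈ univ.erase j, p i' := by
    refine le_trans (h i) (Finset.single_le_sum (f := p) ?_ hi)
    exact fun i' _ => le_trans hγ.le (h i')
  have h2 : p j + ∑ i' ∈ univ.erase j, p i' = 1 := by
    rw [Finset.add_sum_erase _ p (Finset.mem_univ j)]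
    exact hsum
  linarith

theorem stmt_4 {k : ℕ} (γ : ℝ) (hγ : 0 < γ)
    (pstar pw ps : Fin k → ℝ)
    (hstar : (∀ j, γ ≤ pstar j ∧ pstar j ≤ 1) ∧ ∑ j, pstar j = 1)
    (hw : (∀ j, γ ≤ pw j ∧ pw j ≤ 1) ∧ ∑ j, pw j = 1)
    (hs : (∀ j, γ ≤ ps j ∧ ps j ≤ 1) ∧ ∑ j, ps j = 1) :
    |(∑ j, pstar j * Real.log (pstar j / ps j)) -
      ∑ j, pstar j * Real.log (pstar j / pw j)| ≤
      ((Real.sqrt 2 / γ) * Real.log (1 / γ)) *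
        Real.sqrt (∑ j, pw j * Real.log (pw j / ps j)) := by
  obtain ⟨hstar1, hstar2⟩ := hstar
  obtain ⟨hw1, hw2⟩ := hw
  obtain ⟨hs1, hs2⟩ := hs
  -- handle small k
  rcases lt_or_ge k 2 with hk | hk
  · interval_cases k
    · simp at hstar2
    · simp only [Fin.sum_univ_one] at hstar2 hw2 hs2 ⊢
      rw [hstar2, hw2, hs2]
      simp
  set M : ℝ := 1 - γ with hM
  have hγpos : ∀ j, 0 < pstar j := fun j => hγ.trans_le (hstar1 j).1
  have hwpos : ∀ j, 0 < pw j := fun j => hγ.trans_le (hw1 j).1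
  have hspos : ∀ j, 0 < ps j := fun j => hγ.trans_le (hs1 j).1
  have hstarUB : ∀ j, pstar j ≤ M := auxUB hk hγ (fun j => (hstar1 j).1) hstar2
  have hwUB : ∀ j, pw j ≤ M := auxUB hk hγ (fun j => (hw1 j).1) hw2
  have hsUB : ∀ j, ps j ≤ M := auxUB hk hγ (fun j => (hs1 j).1) hs2
  have hM0 : 0 < M := lt_of_lt_of_le (hγpos ⟨0, by omega⟩) (hstarUB ⟨0, by omega⟩)
  -- step 1 : rewrite LHS
  have step1 : (∑ j, pstar j * Real.log (pstar j / ps j)) -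
      ∑ j, pstar j * Real.log (pstar j / pw j)
      = ∑ j, pstar j * Real.log (pw j / ps j) := by
    rw [← Finset.sum_sub_distrib]
    apply Finset.sum_congr rfl
    intro j _
    rw [Real.log_div (hγpos j).ne' (hspos j).ne',
        Real.log_div (hγpos j).ne' (hwpos j).ne',
        Real.log_div (hwpos j).ne' (hspos j).ne']
    ring
  rw [step1]
  -- KL and its positivity
  set KL : ℝ := ∑ j, pw j * Real.log (pw j / ps j) with hKL
  have hKLeq : KL = ∑ j, (pw j * Real.log (pw j / ps j) + ps j - pw j) := by
    rw [hKL]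
    rw [Finset.sum_sub_distrib, Finset.sum_add_distrib, hw2, hs2]
    ring
  have hterm : ∀ j, (pw j - ps j)^2/(2*M) ≤ pw j * Real.log (pw j / ps j) + ps j - pw j :=
    fun j => auxGibbs hγ (hw1 j).1 (hwUB j) (hs1 j).1 (hsUB j)
  have hsq : ∑ j, (pw j - ps j)^2 ≤ 2*M*KL := by
    have h1 : ∑ j, (pw j - ps j)^2/(2*M) ≤ KL := by
      rw [hKLeq]
      exact Finset.sum_le_sum (fun j _ => hterm j)
    have h2 : ∑ j, (pw j - ps j)^2/(2*M) = (∑ j, (pw j - ps j)^2)/(2*M) := by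
      rw [Finset.sum_div]
    rw [h2] at h1
    rw [div_le_iff₀ (by positivity)] at h1
    linarith
  have hKL0 : 0 ≤ KL := by
    rw [hKLeq]
    apply Finset.sum_nonneg
    intro j _
    have := hterm j
    have h0 : 0 ≤ (pw j - ps j)^2/(2*M) := by positivity
    linarith
  -- step 2 : abs of sum
  have step2 : |∑ j, pstar j * Real.log (pw j / ps j)|
      ≤ (1/γ) * ∑ j, pstar j * |pw j - ps j| := by
    calc |∑ j, pstar j * Real.log (pw j / ps j)|
        ≤ ∑ j, |pstar j * Real.log (pw j / ps j)| := Finset.abs_sum_le_sum_abs _ _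
      _ ≤ ∑ j, (1/γ) * (pstar j * |pw j - ps j|) := by
          apply Finset.sum_le_sum
          intro j _
          rw [abs_mul, abs_of_pos (hγpos j)]
          have := auxLip hγ (hw1 j).1 (hs1 j).1
          calc pstar j * |Real.log (pw j / ps j)|
              ≤ pstar j * (|pw j - ps j|/γ) :=
                mul_le_mul_of_nonneg_left this (hγpos j).le
            _ = (1/γ) * (pstar j * |pw j - ps j|) := by ring
      _ = (1/γ) * ∑ j, pstar j * |pw j - ps j| := by rw [← Finset.mul_sum]
  -- Cauchy-Schwarz
  have hCS : ∑ j, pstar j * |pw j - ps j|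
      ≤ Real.sqrt (∑ j, pstar j ^ 2) * Real.sqrt (∑ j, |pw j - ps j| ^ 2) :=
    Real.sum_mul_le_sqrt_mul_sqrt _ _ _
  have hsum_sq_star : ∑ j, pstar j ^ 2 ≤ M := by
    calc ∑ j, pstar j ^ 2 ≤ ∑ j, M * pstar j := by
          apply Finset.sum_le_sum
          intro j _
          rw [sq]
          exact mul_le_mul_of_nonneg_right (hstarUB j) (hγpos j).le
      _ = M := by rw [← Finset.mul_sum, hstar2, mul_one]
  have habs_sq : ∑ j, |pw j - ps j| ^ 2 = ∑ j, (pw j - ps j)^2 := by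
    apply Finset.sum_congr rfl
    intro j _
    rw [sq_abs]
  -- combine
  have hchain : ∑ j, pstar j * |pw j - ps j| ≤ M * Real.sqrt 2 * Real.sqrt KL := by
    calc ∑ j, pstar j * |pw j - ps j|
        ≤ Real.sqrt (∑ j, pstar j ^ 2) * Real.sqrt (∑ j, |pw j - ps j| ^ 2) := hCS
      _ ≤ Real.sqrt M * Real.sqrt (2*M*KL) := by
          apply mul_le_mul (Real.sqrt_le_sqrt hsum_sq_star)
            (by rw [habs_sq]; exact Real.sqrt_le_sqrt hsq)
            (Real.sqrt_nonneg _) (Real.sqrt_nonneg _)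
      _ = M * Real.sqrt 2 * Real.sqrt KL := by
          rw [Real.sqrt_mul (by positivity : (0:ℝ) ≤ 2*M) KL,
              Real.sqrt_mul (by norm_num : (0:ℝ) ≤ 2) M]
          have h := Real.mul_self_sqrt hM0.le
          linear_combination (Real.sqrt 2 * Real.sqrt KL) * h
  -- final : M ≤ log (1/γ)
  have hMlog : M ≤ Real.log (1/γ) := by
    rw [one_div, Real.log_inv]
    have := Real.log_le_sub_one_of_pos hγ
    rw [hM]
    linarith
  calc |∑ j, pstar j * Real.log (pw j / ps j)|
      ≤ (1/γ) * ∑ j, pstar j * |pw j - ps j| := step2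
    _ ≤ (1/γ) * (M * Real.sqrt 2 * Real.sqrt KL) := by
        apply mul_le_mul_of_nonneg_left hchain (by positivity)
    _ ≤ ((Real.sqrt 2 / γ) * Real.log (1/γ)) * Real.sqrt KL := by
        have h1 : (1/γ) * (M * Real.sqrt 2 * Real.sqrt KL)
            = (Real.sqrt 2 / γ) * M * Real.sqrt KL := by ring
        rw [h1]
        apply mul_le_mul_of_nonneg_right _ (Real.sqrt_nonneg _)
        apply mul_le_mul_of_nonneg_left hMlog (by positivity)
end

section
/- Calibration error stability: let F_w, F_{sw}, F^b : X → Δ^k be measurable maps from a probability space X to the probability simplex in ℝ^k, and define MCE(F) = E_X ‖F(X) − F^b(X)‖₁. Then |MCE(F_{sw}) − MCE(F_w)| ≤ 2·sqrt(1 − exp(−E_X[KL(F_w(X)‖F_{sw}(X))])). -/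
open Real Finset MeasureTheory

/-- Pointwise Bretagnolle–Huber: for strictly positive finite probability vectors,
`exp (-KL(p‖q)) ≤ 1 - (‖p-q‖₁)²/4`. -/
lemma bh_aux {k : ℕ} (p q : Fin k → ℝ) (hp : ∀ j, 0 < p j) (hq : ∀ j, 0 < q j)
    (hp1 : ∑ j, p j = 1) (hq1 : ∑ j, q j = 1) :
    Real.exp (-(∑ j, p j * Real.log (p j / q j))) ≤ 1 - (∑ j, |p j - q j|) ^ 2 / 4 := by
  set KL : ℝ := ∑ j, p j * Real.log (p j / q j) with hKL
  set S : ℝ := ∑ j, Real.sqrt (p j * q j) with hS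
  have hne : (Finset.univ : Finset (Fin k)).Nonempty := by
    rcases (Finset.univ : Finset (Fin k)).eq_empty_or_nonempty with h | h
    · rw [h] at hp1; simp at hp1
    · exact h
  have hSpos : 0 < S :=
    Finset.sum_pos (fun j _ => Real.sqrt_pos.2 (mul_pos (hp j) (hq j))) hne
  -- Jensen for log
  have hjen := (strictConcaveOn_log_Ioi.concaveOn).le_map_sum (t := Finset.univ)
    (w := p) (p := fun j => Real.sqrt (q j / p j)) (fun j _ => (hp j).le) hp1
    (fun j _ => Real.sqrt_pos.2 (div_pos (hq j) (hp j)))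
  have hterm : ∀ j, p j • Real.sqrt (q j / p j) = Real.sqrt (p j * q j) := by
    intro j
    have h1 : p j * Real.sqrt (q j / p j) = Real.sqrt ((p j) ^ 2 * (q j / p j)) := by
      rw [Real.sqrt_mul (sq_nonneg _), Real.sqrt_sq (hp j).le]
    have h2 : (p j) ^ 2 * (q j / p j) = p j * q j := by
      field_simp [(hp j).ne']
    rw [smul_eq_mul, h1, h2]
  have hterm2 : ∀ j, p j • Real.log (Real.sqrt (q j / p j)) = -(p j * Real.log (p j / q j)) / 2 := by
    intro j
    rw [smul_eq_mul, Real.log_sqrt (div_nonneg (hq j).le (hp j).le),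
      show q j / p j = (p j / q j)⁻¹ by rw [inv_div], Real.log_inv]
    ring
  have hsum1 : ∑ j, p j • Real.log (Real.sqrt (q j / p j)) = -KL / 2 := by
    rw [Finset.sum_congr rfl (fun j _ => hterm2 j), hKL, ← Finset.sum_neg_distrib,
      ← Finset.sum_div]
  have hsum2 : ∑ j, p j • Real.sqrt (q j / p j) = S := by
    rw [Finset.sum_congr rfl (fun j _ => hterm j), hS]
  rw [hsum1, hsum2] at hjen
  have hexp : Real.exp (-KL / 2) ≤ S := by
    have := Real.exp_le_exp.2 hjen
    rwa [Real.exp_log hSpos] at this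
  have hexp2 : Real.exp (-KL) ≤ S ^ 2 := by
    have h1 : Real.exp (-KL) = Real.exp (-KL / 2) ^ 2 := by
      rw [sq, ← Real.exp_add]; ring_nf
    rw [h1]
    exact pow_le_pow_left₀ (Real.exp_pos _).le hexp 2
  -- Cauchy–Schwarz
  have hcs : S ^ 2 ≤ (∑ j, min (p j) (q j)) * ∑ j, max (p j) (q j) := by
    refine Finset.sum_sq_le_sum_mul_sum_of_sq_eq_mul Finset.univ
      (fun j _ => le_min (hp j).le (hq j).le)
      (fun j _ => le_max_of_le_left (hp j).le) (fun j _ => ?_)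
    rw [Real.sq_sqrt (mul_nonneg (hp j).le (hq j).le), min_mul_max]
  -- sums of min and max
  set D : ℝ := ∑ j, |p j - q j| with hD
  have hsum_add : (∑ j, min (p j) (q j)) + ∑ j, max (p j) (q j) = 2 := by
    rw [← Finset.sum_add_distrib]
    have : ∀ j, min (p j) (q j) + max (p j) (q j) = p j + q j := fun j => min_add_max _ _
    rw [Finset.sum_congr rfl (fun j _ => this j), Finset.sum_add_distrib, hp1, hq1]
    norm_num
  have hsum_sub : (∑ j, max (p j) (q j)) - ∑ j, min (p j) (q j) = D := by
    rw [← Finset.sum_sub_distrib, hD]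
    refine Finset.sum_congr rfl (fun j _ => ?_)
    rw [abs_sub_comm]
    exact max_sub_min_eq_abs _ _
  have hmin : (∑ j, min (p j) (q j)) = 1 - D / 2 := by linarith
  have hmax : (∑ j, max (p j) (q j)) = 1 + D / 2 := by linarith
  calc Real.exp (-KL) ≤ S ^ 2 := hexp2
    _ ≤ (∑ j, min (p j) (q j)) * ∑ j, max (p j) (q j) := hcs
    _ = 1 - D ^ 2 / 4 := by rw [hmin, hmax]; ring

theorem stmt_5 {Ω : Type*} [MeasurableSpace Ω] (μ : Measure Ω) [IsProbabilityMeasure μ]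
    {k : ℕ} (Fw Fsw Fb : Ω → Fin k → ℝ)
    (hFwm : Measurable Fw) (hFswm : Measurable Fsw) (hFbm : Measurable Fb)
    (hFw : ∀ x, (∀ j, 0 < Fw x j) ∧ ∑ j, Fw x j = 1)
    (hFsw : ∀ x, (∀ j, 0 < Fsw x j) ∧ ∑ j, Fsw x j = 1)
    (hFb : ∀ x, (∀ j, 0 ≤ Fb x j) ∧ ∑ j, Fb x j = 1)
    (hKL : Integrable (fun x => ∑ j, Fw x j * Real.log (Fw x j / Fsw x j)) μ) :
    |(∫ x, ∑ j, |Fsw x j - Fb x j| ∂μ) - ∫ x, ∑ j, |Fw x j - Fb x j| ∂μ| ≤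
      2 * Real.sqrt (1 - Real.exp (-(∫ x, ∑ j, Fw x j * Real.log (Fw x j / Fsw x j) ∂μ))) := by
  classical
  set KL : Ω → ℝ := fun x => ∑ j, Fw x j * Real.log (Fw x j / Fsw x j) with hKLdef
  set A : Ω → ℝ := fun x => ∑ j, |Fsw x j - Fb x j| with hAdef
  set B : Ω → ℝ := fun x => ∑ j, |Fw x j - Fb x j| with hBdef
  set D : Ω → ℝ := fun x => ∑ j, |Fw x j - Fsw x j| with hDdef
  set Y : Ω → ℝ := fun x => 1 - Real.exp (-(KL x)) with hYdef
  -- measurability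
  have hmw : ∀ j, Measurable fun x => Fw x j := fun j => (measurable_pi_apply j).comp hFwm
  have hms : ∀ j, Measurable fun x => Fsw x j := fun j => (measurable_pi_apply j).comp hFswm
  have hmb : ∀ j, Measurable fun x => Fb x j := fun j => (measurable_pi_apply j).comp hFbm
  have hKLm : Measurable KL := by
    apply Finset.measurable_sum
    intro j _
    exact (hmw j).mul (Real.measurable_log.comp ((hmw j).div (hms j)))
  have hAm : Measurable A :=
    Finset.measurable_sum _ (fun j _ => ((hms j).sub (hmb j)).abs)
  have hBm : Measurable B :=
    Finset.measurable_sum _ (fun j _ => ((hmw j).sub (hmb j)).abs)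
  have hDm : Measurable D :=
    Finset.measurable_sum _ (fun j _ => ((hmw j).sub (hms j)).abs)
  have hYm : Measurable Y :=
    measurable_const.sub (Real.measurable_exp.comp hKLm.neg)
  have hsqYm : Measurable fun x => Real.sqrt (Y x) := Real.continuous_sqrt.measurable.comp hYm
  -- integrability from boundedness
  have int_bdd : ∀ (f : Ω → ℝ) (C : ℝ), Measurable f → (∀ x, |f x| ≤ C) → Integrable f μ := by
    intro f C hm hC
    exact ⟨hm.aestronglyMeasurable,
      HasFiniteIntegral.of_bounded (C := C) (ae_of_all μ (fun x => by
        rw [Real.norm_eq_abs]; exact hC x))⟩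
  -- pointwise bounds
  have habs_bound : ∀ (u v : Ω → Fin k → ℝ), (∀ x, (∀ j, 0 ≤ u x j) ∧ ∑ j, u x j = 1) →
      (∀ x, (∀ j, 0 ≤ v x j) ∧ ∑ j, v x j = 1) →
      ∀ x, |(∑ j, |u x j - v x j|)| ≤ 2 := by
    intro u v hu hv x
    rw [abs_of_nonneg (Finset.sum_nonneg fun j _ => abs_nonneg _)]
    calc ∑ j, |u x j - v x j| ≤ ∑ j, (u x j + v x j) := by
          refine Finset.sum_le_sum fun j _ => ?_
          calc |u x j - v x j| ≤ |u x j| + |v x j| := abs_sub _ _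
            _ = u x j + v x j := by
                rw [abs_of_nonneg ((hu x).1 j), abs_of_nonneg ((hv x).1 j)]
      _ = 2 := by rw [Finset.sum_add_distrib, (hu x).2, (hv x).2]; norm_num
  have hFw' : ∀ x, (∀ j, (0:ℝ) ≤ Fw x j) ∧ ∑ j, Fw x j = 1 :=
    fun x => ⟨fun j => ((hFw x).1 j).le, (hFw x).2⟩
  have hFsw' : ∀ x, (∀ j, (0:ℝ) ≤ Fsw x j) ∧ ∑ j, Fsw x j = 1 :=
    fun x => ⟨fun j => ((hFsw x).1 j).le, (hFsw x).2⟩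
  have hAint : Integrable A μ := int_bdd A 2 hAm (habs_bound Fsw Fb hFsw' hFb)
  have hBint : Integrable B μ := int_bdd B 2 hBm (habs_bound Fw Fb hFw' hFb)
  have hDint : Integrable D μ := int_bdd D 2 hDm (habs_bound Fw Fsw hFw' hFsw')
  -- pointwise Bretagnolle–Huber
  have hbh : ∀ x, Real.exp (-(KL x)) ≤ 1 - (D x) ^ 2 / 4 := fun x =>
    bh_aux (Fw x) (Fsw x) (hFw x).1 (hFsw x).1 (hFw x).2 (hFsw x).2
  have hD0 : ∀ x, 0 ≤ D x := fun x => Finset.sum_nonneg fun j _ => abs_nonneg _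
  have hKL0 : ∀ x, 0 ≤ KL x := by
    intro x
    have h1 : Real.exp (-(KL x)) ≤ 1 := le_trans (hbh x) (by nlinarith [sq_nonneg (D x)])
    have := Real.exp_le_one_iff.1 h1
    linarith
  have hY0 : ∀ x, 0 ≤ Y x := fun x => by
    have := Real.exp_le_one_iff.2 (neg_nonpos.2 (hKL0 x))
    simp only [hYdef]; linarith
  have hY1 : ∀ x, Y x ≤ 1 := fun x => by
    have := (Real.exp_pos (-(KL x))).le
    simp only [hYdef]; linarith
  have hYint : Integrable Y μ := int_bdd Y 1 hYm (fun x => by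
    rw [abs_of_nonneg (hY0 x)]; exact hY1 x)
  have hsqY0 : ∀ x, 0 ≤ Real.sqrt (Y x) := fun x => Real.sqrt_nonneg _
  have hsqYint : Integrable (fun x => Real.sqrt (Y x)) μ := by
    refine int_bdd _ 1 hsqYm (fun x => ?_)
    rw [abs_of_nonneg (hsqY0 x)]
    calc Real.sqrt (Y x) ≤ Real.sqrt 1 := Real.sqrt_le_sqrt (hY1 x)
      _ = 1 := Real.sqrt_one
  have hexpKLint : Integrable (fun x => Real.exp (-(KL x))) μ := by
    refine int_bdd _ 1 (Real.measurable_exp.comp hKLm.neg) (fun x => ?_)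
    rw [abs_of_nonneg (Real.exp_pos _).le]
    exact Real.exp_le_one_iff.2 (neg_nonpos.2 (hKL0 x))
  -- step 1 : |∫A - ∫B| ≤ ∫ D
  have step1 : |(∫ x, A x ∂μ) - ∫ x, B x ∂μ| ≤ ∫ x, D x ∂μ := by
    rw [← integral_sub hAint hBint]
    calc |∫ x, A x - B x ∂μ| ≤ ∫ x, |A x - B x| ∂μ := by
          simpa [Real.norm_eq_abs] using
            norm_integral_le_integral_norm (μ := μ) (f := fun x => A x - B x)
      _ ≤ ∫ x, D x ∂μ := by
          refine integral_mono ((hAint.sub hBint).abs) hDint (fun x => ?_)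
          simp only [hAdef, hBdef, hDdef, ← Finset.sum_sub_distrib]
          calc |∑ j, (|Fsw x j - Fb x j| - |Fw x j - Fb x j|)|
              ≤ ∑ j, |(|Fsw x j - Fb x j| - |Fw x j - Fb x j|)| :=
                Finset.abs_sum_le_sum_abs _ _
            _ ≤ ∑ j, |Fw x j - Fsw x j| := by
                refine Finset.sum_le_sum fun j _ => ?_
                calc |(|Fsw x j - Fb x j| - |Fw x j - Fb x j|)|
                    ≤ |Fsw x j - Fb x j - (Fw x j - Fb x j)| :=
                      abs_abs_sub_abs_le_abs_sub _ _
                  _ = |Fw x j - Fsw x j| := by rw [← abs_neg]; ring_nf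
  -- step 2 : ∫ D ≤ 2 ∫ √Y
  have lin : ∀ (β γ : ℝ) (f : Ω → ℝ), Integrable f μ →
      (∫ x, (β + γ * f x) ∂μ) = β + γ * ∫ x, f x ∂μ := by
    intro β γ f hf
    rw [integral_add (integrable_const β) (hf.const_mul γ), integral_const_mul, integral_const]
    simp
  have step2 : (∫ x, D x ∂μ) ≤ 2 * ∫ x, Real.sqrt (Y x) ∂μ := by
    rw [← integral_const_mul]
    refine integral_mono hDint (hsqYint.const_mul 2) (fun x => ?_)
    have h1 : D x / 2 ≤ Real.sqrt (Y x) := by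
      rw [show D x / 2 = Real.sqrt ((D x / 2) ^ 2) from
        (Real.sqrt_sq (by positivity)).symm]
      refine Real.sqrt_le_sqrt ?_
      have := hbh x
      simp only [hYdef]; nlinarith
    linarith
  -- Jensen for exp (tangent line): exp(-∫KL) ≤ ∫ exp(-KL)
  set I : ℝ := ∫ x, KL x ∂μ with hIdef
  set a : ℝ := Real.exp (-I) with hadef
  have hI0 : 0 ≤ I := integral_nonneg hKL0
  have ha1 : a ≤ 1 := Real.exp_le_one_iff.2 (neg_nonpos.2 hI0)
  have hjensen : a ≤ ∫ x, Real.exp (-(KL x)) ∂μ := by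
    have hpt : ∀ x, a + a * (I - KL x) ≤ Real.exp (-(KL x)) := by
      intro x
      have e1 : Real.exp (-(KL x)) = a * Real.exp (I - KL x) := by
        rw [hadef, ← Real.exp_add]; ring_nf
      have e2 : I - KL x + 1 ≤ Real.exp (I - KL x) := Real.add_one_le_exp _
      have ha0 : 0 < a := Real.exp_pos _
      calc a + a * (I - KL x) = a * (I - KL x + 1) := by ring
        _ ≤ a * Real.exp (I - KL x) := by
            exact mul_le_mul_of_nonneg_left e2 ha0.le
        _ = Real.exp (-(KL x)) := e1.symm
    have heq : (fun x => a + a * (I - KL x)) = fun x => (a + a * I) + (-a) * KL x := by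
      funext x; ring
    have hint : Integrable (fun x => a + a * (I - KL x)) μ := by
      rw [heq]; exact (integrable_const _).add (hKL.const_mul _)
    have := integral_mono hint hexpKLint hpt
    calc a = ∫ x, (a + a * (I - KL x)) ∂μ := by
          rw [heq, lin _ _ _ hKL, ← hIdef]; ring
      _ ≤ ∫ x, Real.exp (-(KL x)) ∂μ := this
  have hYI : (∫ x, Y x ∂μ) ≤ 1 - a := by
    have heq : Y = fun x => 1 + (-1) * Real.exp (-(KL x)) := by
      funext x; simp only [hYdef]; ring
    have : (∫ x, Y x ∂μ) = 1 - ∫ x, Real.exp (-(KL x)) ∂μ := by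
      rw [heq, lin _ _ _ hexpKLint]; ring
    linarith
  -- step 3 : ∫ √Y ≤ √(1 - a)
  set c : ℝ := 1 - a with hcdef
  have hc0 : 0 ≤ c := by linarith
  have step3 : (∫ x, Real.sqrt (Y x) ∂μ) ≤ Real.sqrt c := by
    rcases eq_or_lt_of_le hc0 with hc | hc
    · -- c = 0 : then ∫ Y = 0, Y = 0 a.e.
      have hYzero : (∫ x, Y x ∂μ) = 0 :=
        le_antisymm (by linarith [hYI]) (integral_nonneg hY0)
      have hYae : Y =ᵐ[μ] 0 :=
        (integral_eq_zero_iff_of_nonneg_ae (ae_of_all μ hY0) hYint).1 hYzero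
      have hsq : (fun x => Real.sqrt (Y x)) =ᵐ[μ] (fun _ => (0:ℝ)) :=
        hYae.mono fun x hx => by rw [Pi.zero_apply] at hx; simp [hx]
      have : (∫ x, Real.sqrt (Y x) ∂μ) = 0 := by
        rw [integral_congr_ae hsq]; simp
      rw [this]
      exact Real.sqrt_nonneg _
    · -- c > 0 : tangent line for sqrt
      have hsc : 0 < Real.sqrt c := Real.sqrt_pos.2 hc
      have hpt : ∀ x, Real.sqrt (Y x) ≤ Real.sqrt c + (Y x - c) / (2 * Real.sqrt c) := by
        intro x
        have h1 : Real.sqrt (Y x) ^ 2 = Y x := Real.sq_sqrt (hY0 x)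
        have h2 : Real.sqrt c ^ 2 = c := Real.sq_sqrt hc0
        have key : Real.sqrt (Y x) * (2 * Real.sqrt c) ≤ Y x + c := by
          nlinarith [sq_nonneg (Real.sqrt (Y x) - Real.sqrt c)]
        have h3 : Real.sqrt (Y x) ≤ (Y x + c) / (2 * Real.sqrt c) :=
          (le_div_iff₀ (by positivity)).2 key
        have h4 : (Y x + c) / (2 * Real.sqrt c) =
            Real.sqrt c + (Y x - c) / (2 * Real.sqrt c) := by
          field_simp
          nlinarith [h2]
        linarith [h3, h4.le]
      have heq : (fun x => Real.sqrt c + (Y x - c) / (2 * Real.sqrt c)) =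
          fun x => (Real.sqrt c - c / (2 * Real.sqrt c)) + (1 / (2 * Real.sqrt c)) * Y x := by
        funext x; ring
      have hint : Integrable (fun x => Real.sqrt c + (Y x - c) / (2 * Real.sqrt c)) μ := by
        rw [heq]
        exact (integrable_const _).add (hYint.const_mul _)
      have hmono := integral_mono hsqYint hint hpt
      have hcomp : (∫ x, (Real.sqrt c + (Y x - c) / (2 * Real.sqrt c)) ∂μ) =
          Real.sqrt c + ((∫ x, Y x ∂μ) - c) / (2 * Real.sqrt c) := by
        rw [heq, lin _ _ _ hYint]; ring
      rw [hcomp] at hmono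
      have : ((∫ x, Y x ∂μ) - c) / (2 * Real.sqrt c) ≤ 0 := by
        apply div_nonpos_of_nonpos_of_nonneg
        · linarith [hYI]
        · positivity
      linarith
  -- combine
  calc |(∫ x, A x ∂μ) - ∫ x, B x ∂μ| ≤ ∫ x, D x ∂μ := step1
    _ ≤ 2 * ∫ x, Real.sqrt (Y x) ∂μ := step2
    _ ≤ 2 * Real.sqrt c := by linarith [step3]
    _ = 2 * Real.sqrt (1 - Real.exp (-I)) := by rw [hcdef, hadef]
end

section
/- Bretagnolle–Huber inequality: for probability measures P and Q on the same measurable space, the total variation distance satisfies TV(P, Q) ≤ sqrt(1 − exp(−KL(P‖Q))). -/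
open Real MeasureTheory

theorem stmt_6 {Ω : Type*} [MeasurableSpace Ω] (P Q : Measure Ω)
    [IsProbabilityMeasure P] [IsProbabilityMeasure Q]
    (hPQ : P ≪ Q)
    (hInt : Integrable (fun x => Real.log ((P.rnDeriv Q x).toReal)) P) :
    ∀ A : Set Ω, MeasurableSet A →
      |(P A).toReal - (Q A).toReal| ≤
        Real.sqrt (1 - Real.exp (-(∫ x, Real.log ((P.rnDeriv Q x).toReal) ∂P))) := by
  intro A hA
  set f : Ω → ℝ := fun x => (P.rnDeriv Q x).toReal with hf_def
  have hf_meas : Measurable f := (Measure.measurable_rnDeriv P Q).ennreal_toReal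
  have hf_nonneg : ∀ x, 0 ≤ f x := fun x => ENNReal.toReal_nonneg
  have hf_int : Integrable f Q := Measure.integrable_toReal_rnDeriv
  have hf1 : ∫ x, f x ∂Q = 1 := by
    rw [Measure.integral_toReal_rnDeriv hPQ]
    simp
  set g : Ω → ℝ := fun x => min (f x) 1 with hg_def
  set h : Ω → ℝ := fun x => max (f x) 1 with hh_def
  have hg_meas : Measurable g := hf_meas.min measurable_const
  have hh_meas : Measurable h := hf_meas.max measurable_const
  have hg_int : Integrable g Q := by
    have := hf_int.inf (integrable_const (1 : ℝ))
    exact this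
  have hh_int : Integrable h Q := by
    have := hf_int.sup (integrable_const (1 : ℝ))
    exact this
  have hg_nonneg : ∀ x, 0 ≤ g x := fun x => le_min (hf_nonneg x) zero_le_one
  have hh_nonneg : ∀ x, 0 ≤ h x := fun x => le_trans zero_le_one (le_max_right _ _)
  set m : ℝ := ∫ x, g x ∂Q with hm_def
  have hm_nonneg : 0 ≤ m := integral_nonneg fun x => hg_nonneg x
  have hm_le_one : m ≤ 1 := by
    calc m ≤ ∫ _x, (1 : ℝ) ∂Q :=
          integral_mono hg_int (integrable_const 1) fun x => min_le_right _ _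
      _ = 1 := by simp
  have hM : ∫ x, h x ∂Q = 2 - m := by
    have hsum : ∫ x, (g x + h x) ∂Q = 2 := by
      have : ∀ x, g x + h x = f x + 1 := fun x => min_add_max _ _
      rw [integral_congr_ae (Filter.Eventually.of_forall this),
        integral_add hf_int (integrable_const 1), hf1]
      simp
      norm_num
    have := integral_add hg_int hh_int
    rw [show (fun a => g a + h a) = fun x => g x + h x from rfl] at this
    linarith [this ▸ hsum]
  -- Step A : |P A - Q A| ≤ 1 - m
  have hfg_int : Integrable (fun x => f x - g x) Q := hf_int.sub hg_int
  have hfg_nonneg : ∀ x, 0 ≤ f x - g x := fun x => sub_nonneg.2 (min_le_left _ _)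
  have hfg_total : ∫ x, (f x - g x) ∂Q = 1 - m := by
    rw [integral_sub hf_int hg_int, hf1]
  have h1g_int : Integrable (fun x => 1 - g x) Q := (integrable_const 1).sub hg_int
  have h1g_nonneg : ∀ x, 0 ≤ 1 - g x := fun x => sub_nonneg.2 (min_le_right _ _)
  have h1g_total : ∫ x, ((1 : ℝ) - g x) ∂Q = 1 - m := by
    rw [integral_sub (integrable_const 1) hg_int]
    simp
    rfl
  have hPA : (P A).toReal = ∫ x in A, f x ∂Q :=
    (Measure.setIntegral_toReal_rnDeriv hPQ A).symm
  have hQA : (Q A).toReal = ∫ x in A, (1 : ℝ) ∂Q := by simp; rfl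
  have habs : |(P A).toReal - (Q A).toReal| ≤ 1 - m := by
    rw [abs_le]
    constructor
    · -- Q A - P A ≤ 1 - m, i.e. -(1-m) ≤ P A - Q A
      have step1 : (Q A).toReal - (P A).toReal = ∫ x in A, (1 - f x) ∂Q := by
        rw [hPA, hQA, ← integral_sub (integrable_const 1).integrableOn
          hf_int.integrableOn]
      have step2 : ∫ x in A, (1 - f x) ∂Q ≤ ∫ x in A, (1 - g x) ∂Q := by
        refine setIntegral_mono_on ((integrable_const 1).sub hf_int).integrableOn
          h1g_int.integrableOn hA fun x _ => ?_
        have : g x ≤ f x := min_le_left _ _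
        linarith
      have step3 : ∫ x in A, (1 - g x) ∂Q ≤ ∫ x, (1 - g x) ∂Q :=
        setIntegral_le_integral h1g_int (Filter.Eventually.of_forall h1g_nonneg)
      rw [h1g_total] at step3
      linarith
    · have step1 : (P A).toReal - (Q A).toReal = ∫ x in A, (f x - 1) ∂Q := by
        rw [hPA, hQA, ← integral_sub hf_int.integrableOn
          (integrable_const 1).integrableOn]
      have step2 : ∫ x in A, (f x - 1) ∂Q ≤ ∫ x in A, (f x - g x) ∂Q := by
        refine setIntegral_mono_on (hf_int.sub (integrable_const 1)).integrableOn
          hfg_int.integrableOn hA fun x _ => ?_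
        have : g x ≤ 1 := min_le_right _ _
        linarith
      have step3 : ∫ x in A, (f x - g x) ∂Q ≤ ∫ x, (f x - g x) ∂Q :=
        setIntegral_le_integral hfg_int (Filter.Eventually.of_forall hfg_nonneg)
      rw [hfg_total] at step3
      linarith
  -- Step B : Cauchy-Schwarz
  set a : Ω → ℝ := fun x => Real.sqrt (g x) with ha_def
  set b : Ω → ℝ := fun x => Real.sqrt (h x) with hb_def
  have ha_meas : Measurable a := hg_meas.sqrt
  have hb_meas : Measurable b := hh_meas.sqrt
  have ha_sq : ∀ x, a x ^ (2 : ℝ) = g x := fun x => by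
    rw [Real.rpow_two, Real.sq_sqrt (hg_nonneg x)]
  have hb_sq : ∀ x, b x ^ (2 : ℝ) = h x := fun x => by
    rw [Real.rpow_two, Real.sq_sqrt (hh_nonneg x)]
  have ha_mem : MemLp a (ENNReal.ofReal 2) Q := by
    rw [show ENNReal.ofReal 2 = 2 by norm_num]
    refine (memLp_two_iff_integrable_sq ha_meas.aestronglyMeasurable).mpr ?_
    have : (fun x => a x ^ 2) = g := by
      funext x; rw [← Real.rpow_two, ha_sq]
    rw [this]; exact hg_int
  have hb_mem : MemLp b (ENNReal.ofReal 2) Q := by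
    rw [show ENNReal.ofReal 2 = 2 by norm_num]
    refine (memLp_two_iff_integrable_sq hb_meas.aestronglyMeasurable).mpr ?_
    have : (fun x => b x ^ 2) = h := by
      funext x; rw [← Real.rpow_two, hb_sq]
    rw [this]; exact hh_int
  have hconj : (2 : ℝ).HolderConjugate 2 := by
    constructor <;> norm_num
  have hCS := integral_mul_le_Lp_mul_Lq_of_nonneg (μ := Q) hconj
    (Filter.Eventually.of_forall fun x => Real.sqrt_nonneg _)
    (Filter.Eventually.of_forall fun x => Real.sqrt_nonneg _) ha_mem hb_mem
  have hab : ∀ x, a x * b x = Real.sqrt (f x) := fun x => by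
    rw [ha_def, hb_def, ← Real.sqrt_mul (hg_nonneg x), min_mul_max, mul_one]
  have hCS' : ∫ x, Real.sqrt (f x) ∂Q ≤ Real.sqrt m * Real.sqrt (2 - m) := by
    have e1 : ∫ x, a x * b x ∂Q = ∫ x, Real.sqrt (f x) ∂Q :=
      integral_congr_ae (Filter.Eventually.of_forall hab)
    have e2 : ∫ x, a x ^ (2:ℝ) ∂Q = m :=
      integral_congr_ae (Filter.Eventually.of_forall ha_sq)
    have e3 : ∫ x, b x ^ (2:ℝ) ∂Q = 2 - m := by
      rw [integral_congr_ae (Filter.Eventually.of_forall hb_sq), hM]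
    calc ∫ x, Real.sqrt (f x) ∂Q = ∫ x, a x * b x ∂Q := e1.symm
      _ ≤ (∫ x, a x ^ (2:ℝ) ∂Q) ^ (1/(2:ℝ)) * (∫ x, b x ^ (2:ℝ) ∂Q) ^ (1/(2:ℝ)) := hCS
      _ = Real.sqrt m * Real.sqrt (2 - m) := by
          rw [e2, e3, ← Real.sqrt_eq_rpow, ← Real.sqrt_eq_rpow]
  -- Step C : Jensen
  set KL : ℝ := ∫ x, Real.log (f x) ∂P with hKL_def
  set φ : Ω → ℝ := fun x => (-(1:ℝ)/2) * Real.log (f x) with hφ_def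
  have hφ_int : Integrable φ P := hInt.const_mul _
  have hsmul_eq : ∀ x, f x • Real.exp (φ x) = Real.sqrt (f x) := by
    intro x
    rcases eq_or_lt_of_le (hf_nonneg x) with h0 | hpos
    · simp [φ, ← h0]
    · have hlog : Real.exp (φ x) = (f x) ^ (-(1:ℝ)/2) := by
        rw [Real.rpow_def_of_pos hpos, hφ_def]
        ring_nf
      rw [smul_eq_mul, hlog, Real.sqrt_eq_rpow]
      have hadd := (Real.rpow_add hpos 1 (-1/2)).symm
      rw [Real.rpow_one] at hadd
      rw [hadd]
      norm_num
  have hsqrt_int : Integrable (fun x => Real.sqrt (f x)) Q := by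
    refine Integrable.mono' ((integrable_const 1).add hf_int)
      (hf_meas.sqrt.aestronglyMeasurable) (Filter.Eventually.of_forall fun x => ?_)
    rw [Real.norm_of_nonneg (Real.sqrt_nonneg _)]
    simp only [Pi.add_apply]
    nlinarith [Real.sq_sqrt (hf_nonneg x), Real.sqrt_nonneg (f x),
      sq_nonneg (Real.sqrt (f x) - 1)]
  have hexpφ_int : Integrable (fun x => Real.exp (φ x)) P := by
    rw [← MeasureTheory.integrable_rnDeriv_smul_iff hPQ]
    have : (fun x => (P.rnDeriv Q x).toReal • Real.exp (φ x))
        = fun x => Real.sqrt (f x) := funext hsmul_eq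
    rw [this]
    exact hsqrt_int
  have hjensen : Real.exp (∫ x, φ x ∂P) ≤ ∫ x, Real.exp (φ x) ∂P := by
    have := convexOn_exp.map_integral_le (μ := P) continuous_exp.continuousOn
      isClosed_univ (Filter.Eventually.of_forall fun x => Set.mem_univ _) hφ_int
      (by exact hexpφ_int)
    exact this
  have hint_φ : ∫ x, φ x ∂P = (-(1:ℝ)/2) * KL := by
    rw [hφ_def, integral_const_mul, hKL_def]
  have hchg : ∫ x, Real.exp (φ x) ∂P = ∫ x, Real.sqrt (f x) ∂Q := by
    rw [← MeasureTheory.integral_rnDeriv_smul hPQ]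
    exact integral_congr_ae (Filter.Eventually.of_forall hsmul_eq)
  have hjen2 : Real.exp ((-(1:ℝ)/2) * KL) ≤ ∫ x, Real.sqrt (f x) ∂Q := by
    rw [← hint_φ, ← hchg]; exact hjensen
  -- Step D : combine
  have hexp_sq : Real.exp (-KL) ≤ m * (2 - m) := by
    have h1 : Real.exp ((-(1:ℝ)/2) * KL) ≤ Real.sqrt m * Real.sqrt (2 - m) :=
      le_trans hjen2 hCS'
    have h2 : Real.exp ((-(1:ℝ)/2) * KL) ^ 2 ≤ (Real.sqrt m * Real.sqrt (2 - m)) ^ 2 := by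
      apply sq_le_sq' <;> nlinarith [Real.exp_pos ((-(1:ℝ)/2) * KL),
        Real.sqrt_nonneg m, Real.sqrt_nonneg (2 - m)]
    calc Real.exp (-KL) = Real.exp ((-(1:ℝ)/2) * KL) ^ 2 := by
          rw [← Real.exp_nat_mul]; ring_nf
      _ ≤ (Real.sqrt m * Real.sqrt (2 - m)) ^ 2 := h2
      _ = m * (2 - m) := by
          rw [mul_pow, Real.sq_sqrt hm_nonneg, Real.sq_sqrt (by linarith)]
  have hfinal : 1 - m ≤ Real.sqrt (1 - Real.exp (-KL)) := by
    rw [Real.le_sqrt (by linarith) (by nlinarith)]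
    nlinarith
  exact le_trans habs hfinal
end

section
/- Projection inequality (Pythagorean-type, discrete reverse KL): let V be a convex set of probability vectors in Δ^k with strictly positive entries, let w ∈ Δ^k with strictly positive entries, and let p ∈ V minimize KL(q‖w) over q ∈ V. Then for every g ∈ V, KL(g‖w) ≥ KL(g‖p) + KL(p‖w). -/
open Real Finset

theorem stmt_9 {k : ℕ} (V : Set (Fin k → ℝ)) (hV : Convex ℝ V)
    (hVmem : ∀ v ∈ V, (∀ j, 0 < v j) ∧ ∑ j, v j = 1)
    (w : Fin k → ℝ) (hw : (∀ j, 0 < w j) ∧ ∑ j, w j = 1)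
    (p : Fin k → ℝ) (hpV : p ∈ V)
    (hmin : ∀ q ∈ V, (∑ j, p j * Real.log (p j / w j)) ≤ ∑ j, q j * Real.log (q j / w j)) :
    ∀ g ∈ V, (∑ j, g j * Real.log (g j / w j)) ≥
      (∑ j, g j * Real.log (g j / p j)) + ∑ j, p j * Real.log (p j / w j) := by
  intro g hgV
  obtain ⟨hppos, hpsum⟩ := hVmem p hpV
  obtain ⟨hgpos, hgsum⟩ := hVmem g hgV
  obtain ⟨hwpos, _⟩ := hw
  set d : Fin k → ℝ := fun j => g j - p j with hd
  set h : ℝ → ℝ := fun t => ∑ j, (p j + t * d j) * Real.log ((p j + t * d j) / w j)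
    with hhdef
  set c : ℝ := ∑ j, d j * (Real.log (p j / w j) + 1) with hc
  have hderiv : HasDerivAt h c 0 := by
    rw [hhdef, hc]
    apply HasDerivAt.fun_sum
    intro j _
    have hpj : (0:ℝ) < p j := hppos j
    have haff : HasDerivAt (fun t : ℝ => p j + t * d j) (d j) 0 := by
      simpa using (hasDerivAt_id (0:ℝ)).mul_const (d j) |>.const_add (p j)
    have hmain : HasDerivAt (fun x : ℝ => x * Real.log (x / w j))
        (Real.log (p j / w j) + 1) (p j) := by
      have h1 : HasDerivAt (fun x : ℝ => x * Real.log x) (Real.log (p j) + 1) (p j) :=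
        Real.hasDerivAt_mul_log (ne_of_gt hpj)
      have h2 : HasDerivAt (fun x : ℝ => x * Real.log (w j)) (Real.log (w j)) (p j) := by
        simpa using (hasDerivAt_id (p j)).mul_const (Real.log (w j))
      have := h1.fun_sub h2
      have heq : (fun x : ℝ => x * Real.log x - x * Real.log (w j))
          = fun x : ℝ => x * (Real.log x - Real.log (w j)) := by
        funext x; ring
      rw [heq] at this
      have : HasDerivAt (fun x : ℝ => x * (Real.log x - Real.log (w j)))
          (Real.log (p j) + 1 - Real.log (w j)) (p j) := this
      have hcongr : (fun x : ℝ => x * Real.log (x / w j))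
          =ᶠ[nhds (p j)] fun x : ℝ => x * (Real.log x - Real.log (w j)) := by
        filter_upwards [eventually_gt_nhds hpj] with x hx
        rw [Real.log_div (ne_of_gt hx) (ne_of_gt (hwpos j))]
      have hfinal := this.congr_of_eventuallyEq hcongr
      refine hfinal.congr_deriv ?_
      rw [Real.log_div (ne_of_gt hpj) (ne_of_gt (hwpos j))]
      ring
    have h00 : p j = p j + 0 * d j := by ring
    rw [h00] at hmain
    have hcomp := hmain.comp 0 haff
    simp only [zero_mul, add_zero] at hcomp
    refine hcomp.congr_deriv ?_
    ring
  -- h t ≥ h 0 for t ∈ (0,1]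
  have h0 : h 0 = ∑ j, p j * Real.log (p j / w j) := by
    simp [hhdef]
  have hge : ∀ t ∈ Set.Ioc (0:ℝ) 1, h 0 ≤ h t := by
    intro t ht
    have hq : (fun j => p j + t * d j) ∈ V := by
      have := hV hpV hgV (a := 1 - t) (b := t) (by linarith [ht.2]) (le_of_lt ht.1)
        (by ring)
      convert this using 1
      funext j
      simp [hd]
      ring
    have := hmin _ hq
    rw [h0]; exact this
  -- c ≥ 0 from the one-sided limit of slopes
  have hc0 : 0 ≤ c := by
    have hslope := hderiv.hasDerivWithinAt (s := Set.Ioi (0:ℝ))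
    have htend : Filter.Tendsto (fun t => (h t - h 0) / t) (nhdsWithin 0 (Set.Ioi 0))
        (nhds c) := by
      have := (hasDerivWithinAt_iff_tendsto_slope.mp hslope)
      have hsub : nhdsWithin (0:ℝ) (Set.Ioi 0 \ {0}) = nhdsWithin 0 (Set.Ioi 0) := by
        congr 1
        ext x; simp (config := { contextual := true }) [ne_of_gt]
      rw [hsub] at this
      refine this.congr' ?_
      filter_upwards [self_mem_nhdsWithin] with t (ht : t ∈ Set.Ioi 0)
      simp [slope, (Set.mem_Ioi.mp ht).ne', div_eq_inv_mul]
    refine ge_of_tendsto htend ?_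
    filter_upwards [self_mem_nhdsWithin,
      Ioo_mem_nhdsGT_of_mem (Set.mem_Ico.mpr ⟨le_refl (0:ℝ), one_pos⟩)] with t ht1 ht2
    have : h 0 ≤ h t := hge t ⟨ht2.1, le_of_lt ht2.2⟩
    have ht0 : (0:ℝ) < t := ht1
    exact div_nonneg (by linarith) (le_of_lt ht0)
  -- unpack c ≥ 0
  have hdsum : ∑ j, d j = 0 := by
    simp only [hd, Finset.sum_sub_distrib, hgsum, hpsum, sub_self]
  have hkey : ∑ j, p j * Real.log (p j / w j) ≤ ∑ j, g j * Real.log (p j / w j) := by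
    have hc' : c = (∑ j, d j * Real.log (p j / w j)) + ∑ j, d j := by
      rw [hc, ← Finset.sum_add_distrib]
      congr 1; funext j; ring
    rw [hc', hdsum, add_zero] at hc0
    have : ∑ j, d j * Real.log (p j / w j)
        = (∑ j, g j * Real.log (p j / w j)) - ∑ j, p j * Real.log (p j / w j) := by
      rw [← Finset.sum_sub_distrib]
      congr 1; funext j; simp [hd]; ring
    linarith [hc0, this ▸ hc0]
  -- rewrite the goal
  have hsplit : ∑ j, g j * Real.log (g j / w j)
      = (∑ j, g j * Real.log (g j / p j)) + ∑ j, g j * Real.log (p j / w j) := by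
    rw [← Finset.sum_add_distrib]
    congr 1; funext j
    rw [Real.log_div (ne_of_gt (hgpos j)) (ne_of_gt (hwpos j)),
        Real.log_div (ne_of_gt (hgpos j)) (ne_of_gt (hppos j)),
        Real.log_div (ne_of_gt (hppos j)) (ne_of_gt (hwpos j))]
    ring
  rw [ge_iff_le, hsplit]
  linarith [hkey]
end
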